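/- Let n ≥ 1, let c ∈ ℝⁿ be any fixed vector, and let ψ : ℝ → [0,1] be the triangle-wave activation ψ(x) = (1/π)·arccos(cos(2πx)). Define T : [0,1]ⁿ → [0,1]ⁿ component-wise by T(s)ᵢ = ψ(sᵢ + cᵢ). If S is a random vector uniformly distributed on the unit hypercube [0,1]ⁿ (i.e., its law is the Lebesgue/uniform probability measure on [0,1]ⁿ), then T(S) is also uniformly distributed on [0,1]ⁿ. Equivalently, the pushforward of the uniform probability measure on [0,1]ⁿ under T equals the uniform probability measure on [0,1]ⁿ. -/

import Mathlib

/-!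
Since `ψ` is 1-periodic and equals `2|x|` on `[-1/2, 1/2]`, it is twice the norm on the circle
`ℝ ⧸ ℤ`, where a closed ball of radius `r ≤ 1/2` has Haar measure `2r`; hence `2‖·‖` pushes Haar
measure forward to the uniform measure on `[0, 1]`. The uniform measure on `[0, 1]` projects onto
Haar measure, which is rotation invariant, so each shift `x ↦ ψ (x + c)` preserves the uniform
measure on `[0, 1]`, and the cube is the product of these.
-/

open MeasureTheory Real

/-- The triangle-wave activation `ψ(x) = (1/π) · arccos(cos(2πx))`. -/
noncomputable def triangleWave (x : ℝ) : ℝ := (1 / π) * arccos (cos (2 * π * x))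

open Set

lemma triangleWave_periodic : Function.Periodic triangleWave 1 := by
  intro x
  rw [triangleWave, triangleWave, mul_add, mul_one, cos_add_two_pi]

lemma triangleWave_eq_two_mul_abs {x : ℝ} (hx : |x| ≤ 1 / 2) : triangleWave x = 2 * |x| := by
  have hcos : cos (2 * π * x) = cos (2 * π * |x|) := by
    rcases abs_cases x with ⟨h, _⟩ | ⟨h, _⟩
    · rw [h]
    · rw [h, mul_neg, cos_neg]
  rw [triangleWave, hcos, arccos_cos (by positivity) (by nlinarith [abs_nonneg x, pi_pos])]
  field_simp

lemma triangleWave_eq_two_mul_norm (x : ℝ) : triangleWave x = 2 * ‖(x : UnitAddCircle)‖ := by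
  rw [UnitAddCircle.norm_eq, ← triangleWave_eq_two_mul_abs (abs_sub_round x),
    ← mul_one (round x : ℝ), triangleWave_periodic.sub_int_mul_eq]

lemma UnitAddCircle.map_two_mul_norm_volume :
    (volume : Measure UnitAddCircle).map (fun y => 2 * ‖y‖) = volume.restrict (Icc 0 1) := by
  refine Measure.ext_of_Iic _ _ fun t => ?_
  have hball : (fun y : UnitAddCircle => 2 * ‖y‖) ⁻¹' Iic t = Metric.closedBall 0 (t / 2) := by
    ext y
    simp only [mem_preimage, mem_Iic, mem_closedBall_zero_iff]
    constructor <;> intro h <;> linarith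
  have hcut : Icc (0 : ℝ) 1 ∩ Iic t = Icc 0 (min 1 t) := by
    rw [← Ici_inter_Iic, inter_assoc, Iic_inter_Iic, Ici_inter_Iic]
  rw [Measure.map_apply (by fun_prop) measurableSet_Iic, hball, AddCircle.volume_closedBall,
    Measure.restrict_apply' measurableSet_Icc, inter_comm, hcut, Real.volume_Icc, sub_zero,
    mul_div_cancel₀ t two_ne_zero]

lemma measurePreserving_triangleWave_add_const (c : ℝ) :
    MeasurePreserving (fun x => triangleWave (x + c))
      (volume.restrict (Icc 0 1)) (volume.restrict (Icc 0 1)) := by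
  have hproj : MeasurePreserving ((↑) : ℝ → UnitAddCircle) (volume.restrict (Icc 0 1)) := by
    rw [← Measure.restrict_congr_set Ioc_ae_eq_Icc]
    simpa only [zero_add] using UnitAddCircle.measurePreserving_mk 0
  have hnorm : MeasurePreserving (fun y : UnitAddCircle => 2 * ‖y‖)
      volume (volume.restrict (Icc 0 1)) :=
    ⟨by fun_prop, UnitAddCircle.map_two_mul_norm_volume⟩
  convert hnorm.comp ((measurePreserving_add_right volume (c : UnitAddCircle)).comp hproj)
    using 1
  ext x
  rw [Function.comp_apply, Function.comp_apply, ← AddCircle.coe_add,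
    triangleWave_eq_two_mul_norm]

theorem triangleWave_shift_preserves_uniform_cube_general
    (n : ℕ) (c : Fin n → ℝ) :
    Measure.map (fun s : Fin n → ℝ => fun i => triangleWave (s i + c i))
      (volume.restrict (Set.univ.pi fun _ : Fin n => Set.Icc (0 : ℝ) 1)) =
    volume.restrict (Set.univ.pi fun _ : Fin n => Set.Icc (0 : ℝ) 1) := by
  rw [volume_pi, Measure.restrict_pi_pi]
  exact (measurePreserving_pi _ _ fun i => measurePreserving_triangleWave_add_const (c i)).map_eq

/-- Pushing forward the uniform probability measure on the unit hypercube `[0,1]ⁿ`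
under the componentwise shifted triangle wave `T(s)ᵢ = ψ(sᵢ + cᵢ)` yields the uniform
probability measure on `[0,1]ⁿ` again. -/
theorem triangleWave_shift_preserves_uniform_cube
    (n : ℕ) (hn : 1 ≤ n) (c : Fin n → ℝ) :
    Measure.map (fun s : Fin n → ℝ => fun i => triangleWave (s i + c i))
      (volume.restrict (Set.univ.pi fun _ : Fin n => Set.Icc (0 : ℝ) 1)) =
    volume.restrict (Set.univ.pi fun _ : Fin n => Set.Icc (0 : ℝ) 1) :=
  triangleWave_shift_preserves_uniform_cube_general n c
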